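/- For every x ∈ {1,…,m} and every n ≥ 0, the subspace Ĉ^n_x consists of nontrivial cocycles: Ĉ^n_x ⊆ ker(D_x : C^n_x → C^{n+1}_x) and Ĉ^n_x ∩ im(D_x : C^{n−1}_x → C^n_x) = 0 (here D_x means D_{e_1} when x = 1). -/

import Mathlib

open Finsupp Submodule LinearMap

set_option maxSynthPendingDepth 2

namespace NilpotentCohomology

/-- The big space of cochains of all degrees: formal ℂ-linear combinations of
basis symbols `φ^I_x` indexed by a multi-index `I : List (Fin m)` and an output
index `x : Fin m`. -/
abbrev Cochain (m : ℕ) : Type := (List (Fin m) × Fin m) →₀ ℂ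

/-- Parity of an index: `0` if the index is among the first `r` (even) ones, `1` otherwise. -/
def par (r : ℕ) {m : ℕ} (i : Fin m) : ℕ := if (i : ℕ) < r then 0 else 1

/-- Parity of a multi-index: the sum of the parities of its entries. -/
def lpar (r : ℕ) {m : ℕ} (I : List (Fin m)) : ℕ := (I.map (par r)).sum

/-- Parity of a basis cochain `φ^I_x`: `|I| + |x|`. -/
def ppar (r : ℕ) {m : ℕ} (p : List (Fin m) × Fin m) : ℕ := lpar r p.1 + par r p.2

/-- `(I, J, k)`: the multi-index `I` with its `k`-th entry (0-indexed) replaced by the string `J`. -/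
def insertAt {m : ℕ} (I J : List (Fin m)) (k : ℕ) : List (Fin m) :=
  I.take k ++ J ++ I.drop (k + 1)

/-- The insertion product of two basis cochains `φ^I_x ∘ φ^J_y`. -/
noncomputable def basisComp (r : ℕ) {m : ℕ} (p q : List (Fin m) × Fin m) : Cochain m :=
  ∑ k : Fin p.1.length,
    if p.1.get k = q.2 then
      ((-1 : ℂ) ^ (lpar r (p.1.take ((k : ℕ) + 1)) * ppar r q)) •
        Finsupp.single (insertAt p.1 q.1 (k : ℕ), p.2) (1 : ℂ)
    else 0

/-- The insertion product, extended bilinearly. -/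
noncomputable def comp (r : ℕ) {m : ℕ} :
    Cochain m →ₗ[ℂ] Cochain m →ₗ[ℂ] Cochain m :=
  Finsupp.lsum ℂ fun p => LinearMap.toSpanSingleton ℂ _
    (Finsupp.lsum ℂ fun q => LinearMap.toSpanSingleton ℂ (Cochain m) (basisComp r p q))

/-- The bracket `[φ, ψ] = φ∘ψ − (−1)^{|φ||ψ|} ψ∘φ` of two parity-homogeneous cochains
of parities `pf` and `pg`. -/
noncomputable def bracket (r : ℕ) {m : ℕ} (pf pg : ℕ) (f g : Cochain m) : Cochain m :=
  comp r f g - ((-1 : ℂ) ^ (pf * pg)) • comp r g f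

/-- The quadratic cochain `φ^{(a,a)}_b`. -/
noncomputable def dd {m : ℕ} (a b : Fin m) : Cochain m :=
  Finsupp.single ([a, a], b) (1 : ℂ)

/-- The linear map multiplying each basis cochain by `(−1)^{its parity}`. -/
noncomputable def twist (r : ℕ) {m : ℕ} : Cochain m →ₗ[ℂ] Cochain m :=
  Finsupp.lsum ℂ fun p => LinearMap.toSpanSingleton ℂ (Cochain m)
    (((-1 : ℂ) ^ (ppar r p)) • Finsupp.single p (1 : ℂ))

/-- The coboundary operator `D(φ) = [d, φ] = d∘φ − (−1)^{|d||φ|} φ∘d` for the odd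
codifferential `d = φ^{(a,a)}_b`, extended linearly from parity-homogeneous `φ`. -/
noncomputable def Dop (r : ℕ) {m : ℕ} (a b : Fin m) : Cochain m →ₗ[ℂ] Cochain m :=
  comp r (dd a b) - ((comp r).flip (dd a b)) ∘ₗ twist r

/-- `C^n`: the span of the basis cochains `φ^I_x` with `I` of length `n`. -/
noncomputable def Cn (m n : ℕ) : Submodule ℂ (Cochain m) :=
  Submodule.span ℂ
    {f | ∃ I : List (Fin m), I.length = n ∧ ∃ x : Fin m, f = Finsupp.single (I, x) 1}

/-- `C^n_x`: the span of the basis cochains `φ^I_x` with `I` of length `n` and output `x`. -/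
noncomputable def Cnx (m : ℕ) (n : ℕ) (x : Fin m) : Submodule ℂ (Cochain m) :=
  Submodule.span ℂ
    {f | ∃ I : List (Fin m), I.length = n ∧ f = Finsupp.single (I, x) 1}

/-- The projection onto the cochains with output index `x`. -/
noncomputable def projOut {m : ℕ} (x : Fin m) : Cochain m →ₗ[ℂ] Cochain m :=
  Finsupp.lsum ℂ fun p => LinearMap.toSpanSingleton ℂ (Cochain m)
    (if p.2 = x then Finsupp.single p (1 : ℂ) else 0)

/-- `λ^J (φ^I_x) = φ^{JI}_x`, extended linearly. -/
noncomputable def lam {m : ℕ} (J : List (Fin m)) : Cochain m →ₗ[ℂ] Cochain m :=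
  Finsupp.lsum ℂ fun p => LinearMap.toSpanSingleton ℂ (Cochain m)
    (Finsupp.single (J ++ p.1, p.2) (1 : ℂ))

/-- `ρ^J (φ^I_x) = (−1)^{|I||J|} φ^{IJ}_x`, extended linearly. -/
noncomputable def rho (r : ℕ) {m : ℕ} (J : List (Fin m)) : Cochain m →ₗ[ℂ] Cochain m :=
  Finsupp.lsum ℂ fun p => LinearMap.toSpanSingleton ℂ (Cochain m)
    (((-1 : ℂ) ^ (lpar r p.1 * lpar r J)) • Finsupp.single (p.1 ++ J, p.2) (1 : ℂ))

/-- `θ = λ^{(a,b)} − λ^{(b,a)}`. -/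
noncomputable def theta {m : ℕ} (a b : Fin m) : Cochain m →ₗ[ℂ] Cochain m :=
  lam [a, b] - lam [b, a]

/-- `τ`: swaps the outputs `a` and `b` of basis cochains (identity on other outputs). -/
noncomputable def tau {m : ℕ} (a b : Fin m) : Cochain m →ₗ[ℂ] Cochain m :=
  Finsupp.lsum ℂ fun p => LinearMap.toSpanSingleton ℂ (Cochain m)
    (Finsupp.single (p.1, if p.2 = a then b else if p.2 = b then a else p.2) (1 : ℂ))

/-! ### Full cohomology -/

/-- Cocycles of degree `n` of the full complex. -/
noncomputable def Zfull (r : ℕ) {m : ℕ} (a b : Fin m) (n : ℕ) : Submodule ℂ (Cochain m) :=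
  Cn m n ⊓ LinearMap.ker (Dop r a b)

/-- Coboundaries of degree `n` of the full complex (`C^{-1} = 0`). -/
noncomputable def Bfull (r : ℕ) {m : ℕ} (a b : Fin m) : ℕ → Submodule ℂ (Cochain m)
  | 0 => ⊥
  | n + 1 => Submodule.map (Dop r a b) (Cn m n)

/-- The full cohomology `H^n = Z^n / B^n`. -/
noncomputable abbrev Hfull (r : ℕ) {m : ℕ} (a b : Fin m) (n : ℕ) : Type :=
  Zfull r a b n ⧸ (Bfull r a b n).comap (Zfull r a b n).subtype

/-! ### The restricted complexes -/

/-- The restricted differential `D_x`: the `e₁`-output component of `D` when `x = a`,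
and `D` itself (which preserves output `x`) otherwise. -/
noncomputable def Dx (r : ℕ) {m : ℕ} (a b x : Fin m) : Cochain m →ₗ[ℂ] Cochain m :=
  if x = a then projOut a ∘ₗ Dop r a b else Dop r a b

/-- Cocycles of the restricted complex `(C^•_x, D_x)`. -/
noncomputable def Zx (r : ℕ) {m : ℕ} (a b x : Fin m) (n : ℕ) : Submodule ℂ (Cochain m) :=
  Cnx m n x ⊓ LinearMap.ker (Dx r a b x)

/-- Coboundaries of the restricted complex `(C^•_x, D_x)` (`C^{-1}_x = 0`). -/
noncomputable def Bx (r : ℕ) {m : ℕ} (a b x : Fin m) : ℕ → Submodule ℂ (Cochain m)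
  | 0 => ⊥
  | n + 1 => Submodule.map (Dx r a b x) (Cnx m n x)

/-- Cohomology `H^n_x` of the restricted complex `(C^•_x, D_x)`. -/
noncomputable abbrev Hx (r : ℕ) {m : ℕ} (a b x : Fin m) (n : ℕ) : Type :=
  Zx r a b x n ⧸ (Bx r a b x n).comap (Zx r a b x n).subtype

/-! ### The subcomplex `C^•_a ⊕ C^•_b` and the `b`-output complex -/

/-- `C^n_a ⊕ C^n_b` (internal direct sum). -/
noncomputable def Cpair (m : ℕ) (a b : Fin m) (n : ℕ) : Submodule ℂ (Cochain m) :=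
  Cnx m n a ⊔ Cnx m n b

noncomputable def Zpair (r : ℕ) {m : ℕ} (a b : Fin m) (n : ℕ) : Submodule ℂ (Cochain m) :=
  Cpair m a b n ⊓ LinearMap.ker (Dop r a b)

noncomputable def Bpair (r : ℕ) {m : ℕ} (a b : Fin m) : ℕ → Submodule ℂ (Cochain m)
  | 0 => ⊥
  | n + 1 => Submodule.map (Dop r a b) (Cpair m a b n)

/-- `H^n`: the cohomology of the subcomplex `(C^•_a ⊕ C^•_b, D)`. -/
noncomputable abbrev Hpair (r : ℕ) {m : ℕ} (a b : Fin m) (n : ℕ) : Type :=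
  Zpair r a b n ⧸ (Bpair r a b n).comap (Zpair r a b n).subtype

/-- Cocycles of `(C^•_b, D_b)`, where `D_b` is the restriction of `D`. -/
noncomputable def Zm (r : ℕ) {m : ℕ} (a b : Fin m) (n : ℕ) : Submodule ℂ (Cochain m) :=
  Cnx m n b ⊓ LinearMap.ker (Dop r a b)

noncomputable def Bm (r : ℕ) {m : ℕ} (a b : Fin m) : ℕ → Submodule ℂ (Cochain m)
  | 0 => ⊥
  | n + 1 => Submodule.map (Dop r a b) (Cnx m n b)

/-- `H^n_b`: the cohomology of `(C^•_b, D_b)`. -/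
noncomputable abbrev Hm (r : ℕ) {m : ℕ} (a b : Fin m) (n : ℕ) : Type :=
  Zm r a b n ⧸ (Bm r a b n).comap (Zm r a b n).subtype

lemma Zm_le_Zpair (r : ℕ) {m : ℕ} (a b : Fin m) (n : ℕ) :
    Zm r a b n ≤ Zpair r a b n :=
  inf_le_inf le_sup_right le_rfl

lemma Bm_le_Bpair (r : ℕ) {m : ℕ} (a b : Fin m) : ∀ n : ℕ, Bm r a b n ≤ Bpair r a b n
  | 0 => bot_le
  | _ + 1 => Submodule.map_mono le_sup_right

/-- The natural map `H^n_b → H^n` induced by the inclusion of cocycles. -/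
noncomputable def iotaHm (r : ℕ) {m : ℕ} (a b : Fin m) (n : ℕ) :
    Hm r a b n →ₗ[ℂ] Hpair r a b n :=
  Submodule.mapQ _ _ (Submodule.inclusion (Zm_le_Zpair r a b n))
    (fun z hz => Bm_le_Bpair r a b n hz)

/-- `Ĥ^n_f`: the image of `H^n_b` in `H^n`. -/
noncomputable def Hfhat (r : ℕ) {m : ℕ} (a b : Fin m) (n : ℕ) : Submodule ℂ (Hpair r a b n) :=
  LinearMap.range (iotaHm r a b n)

/-- `Ĥ^n_e = H^n / Ĥ^n_f`. -/
noncomputable abbrev Hehat (r : ℕ) {m : ℕ} (a b : Fin m) (n : ℕ) : Type :=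
  Hpair r a b n ⧸ Hfhat r a b n

/-! ### The spaces `Ĉ^n_x` of nontrivial cocycles -/

/-- The recursively defined subspaces `Ĉ^n_x` of nontrivial cocycles. -/
noncomputable def Chat (r : ℕ) {m : ℕ} (a b x : Fin m) : ℕ → Submodule ℂ (Cochain m)
  | 0 => Submodule.span ℂ {Finsupp.single (([] : List (Fin m)), x) 1}
  | 1 => Submodule.span ℂ
      ({Finsupp.single ([a], x) 1} ∪
        ⋃ c ∈ {c : Fin m | c ≠ a ∧ c ≠ b}, lam [c] '' (Chat r a b x 0 : Set (Cochain m)))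
  | n + 2 => Submodule.span ℂ
      ((⋃ c ∈ {c : Fin m | c ≠ a ∧ c ≠ b},
          lam [c] '' (Chat r a b x (n + 1) : Set (Cochain m))) ∪
        (theta a b '' (Chat r a b x n : Set (Cochain m))) ∪
        ⋃ c ∈ {c : Fin m | c ≠ a ∧ c ≠ b},
          (lam [a] + rho r [a]) '' (lam [c] '' (Chat r a b x n : Set (Cochain m))))

/-! On a basis cochain `φ^I_x`, the restricted differential `D_x` equals `-R`, where
`R φ = (-1)^{|φ|} φ ∘ d` is the signed sum of the ways to replace one letter `f_s` of `I` by
`e₁e₁`: the other half `d ∘ φ` of `D φ` vanishes unless `x = e₁`, and then has output `f_s`, which `D_{e₁}` discards. `R` commutes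
with `λ^c` for `c ≠ f_s`, with `ρ^{e₁}` and with `θ`, and kills `φ_x` and `φ^{e₁}_x`; hence
`Ĉ^n_x ⊆ ker D_x`.

Every coboundary is therefore a combination of multi-indices containing the factor `e₁e₁`, so it
is killed by the projection `P` onto the multi-indices avoiding that factor. It remains to see
that `P` is injective on `Ĉ^n_x`, by induction on `n`. For `z ∈ Ĉ^{n+2}_x`, stripping a leading
`e₁` from `P z` leaves `λ^{f_s} (P v) + ∑_c λ^c (P w_c)`, where `θ v` and the
`(λ^{e₁} + ρ^{e₁}) λ^c w_c` are the corresponding components of `z`; so `P z = 0` forces `v` and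
all `w_c` to vanish, and then stripping the leading `c` does the same for the `λ^c`-components. -/

section

variable {m r : ℕ}

lemma lpar_cons (c : Fin m) (I : List (Fin m)) : lpar r (c :: I) = par r c + lpar r I := rfl

lemma lpar_singleton (a : Fin m) : lpar r [a] = par r a := by
  simp [lpar]

lemma lpar_append (I J : List (Fin m)) : lpar r (I ++ J) = lpar r I + lpar r J := by
  simp [lpar]

lemma lam_single (J : List (Fin m)) (p : List (Fin m) × Fin m) (t : ℂ) :
    lam J (single p t) = single (J ++ p.1, p.2) t := by
  simp [lam, Finsupp.smul_single]

lemma rho_single (J : List (Fin m)) (p : List (Fin m) × Fin m) (t : ℂ) :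
    rho r J (single p t) = (-1 : ℂ) ^ (lpar r p.1 * lpar r J) • single (p.1 ++ J, p.2) t := by
  simp [rho, Finsupp.smul_single, mul_comm]

lemma twist_single (p : List (Fin m) × Fin m) (t : ℂ) :
    twist r (single p t) = (-1 : ℂ) ^ ppar r p • single p t := by
  simp [twist, Finsupp.smul_single, mul_comm]

lemma projOut_single (x : Fin m) (p : List (Fin m) × Fin m) (t : ℂ) :
    projOut x (single p t) = if p.2 = x then single p t else 0 := by
  simp [projOut, apply_ite (t • ·), Finsupp.smul_single]

lemma comp_single_single (p q : List (Fin m) × Fin m) :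
    comp r (single p 1) (single q 1) = basisComp r p q := by
  simp [comp]

lemma cochain_hom_ext {f g : Cochain m →ₗ[ℂ] Cochain m}
    (h : ∀ p, f (single p 1) = g (single p 1)) : f = g :=
  Finsupp.lhom_ext' fun p => LinearMap.ext_ring (h p)

lemma lam_lam (J K : List (Fin m)) (g : Cochain m) : lam J (lam K g) = lam (J ++ K) g :=
  LinearMap.congr_fun
    (cochain_hom_ext fun p => by simp [lam_single] : lam J ∘ₗ lam K = lam (J ++ K)) g

lemma theta_apply (a b : Fin m) (g : Cochain m) :
    theta a b g = lam [a] (lam [b] g) - lam [b] (lam [a] g) := by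
  simp [theta, lam_lam]

lemma rho_lam_of_lpar_eq_zero {J : List (Fin m)} (hJ : lpar r J = 0) (K : List (Fin m))
    (g : Cochain m) : rho r J (lam K g) = lam K (rho r J g) :=
  LinearMap.congr_fun (cochain_hom_ext fun p => by simp [lam_single, rho_single, hJ] :
    rho r J ∘ₗ lam K = lam K ∘ₗ rho r J) g

lemma twist_lam_of_par_eq_zero {a : Fin m} (ha : par r a = 0) (g : Cochain m) :
    twist r (lam [a] g) = lam [a] (twist r g) :=
  LinearMap.congr_fun
    (cochain_hom_ext fun p => by simp [lam_single, twist_single, ppar, lpar_cons, ha] :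
      twist r ∘ₗ lam [a] = lam [a] ∘ₗ twist r) g

lemma basisComp_eq_zero {p q : List (Fin m) × Fin m} (h : q.2 ∉ p.1) : basisComp r p q = 0 :=
  Finset.sum_eq_zero fun k _ => if_neg fun hk : p.1.get k = q.2 => h (hk ▸ p.1.get_mem k)

lemma projOut_basisComp (x : Fin m) (p q : List (Fin m) × Fin m) :
    projOut x (basisComp r p q) = if p.2 = x then basisComp r p q else 0 := by
  split_ifs with hx
  · simp only [basisComp, map_sum, apply_ite (projOut x), map_smul, projOut_single, hx,
      if_true, map_zero]
  · simp [basisComp, map_sum, apply_ite (projOut x), projOut_single, hx]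

lemma basisComp_cons (c : Fin m) (I : List (Fin m)) (y : Fin m) (q : List (Fin m) × Fin m) :
    basisComp r (c :: I, y) q =
      (-1 : ℂ) ^ (par r c * ppar r q) •
        ((if c = q.2 then single (q.1 ++ I, y) 1 else 0) + lam [c] (basisComp r (I, y) q)) := by
  simp only [basisComp, List.length_cons, Fin.sum_univ_succ, smul_add, map_sum, Finset.smul_sum]
  congr 1
  · simp [insertAt, smul_ite, lpar]
  · refine Finset.sum_congr rfl fun k _ => ?_
    simp only [List.get_eq_getElem, Fin.val_succ, List.getElem_cons_succ, apply_ite (lam [c]),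
      map_smul, lam_single, map_zero, smul_ite, smul_zero, smul_smul, ← pow_add]
    congr 2
    simp [List.take_succ_cons, lpar_cons, add_mul]

lemma basisComp_append_of_par_eq_zero {c : Fin m} (hc : par r c = 0) (I : List (Fin m))
    (y : Fin m) {q : List (Fin m) × Fin m} (hcq : c ≠ q.2) :
    basisComp r (I ++ [c], y) q = rho r [c] (basisComp r (I, y) q) := by
  have hlc : lpar r [c] = 0 := (lpar_singleton c).trans hc
  induction I with
  | nil =>
    rw [basisComp_eq_zero (by simpa using hcq.symm), basisComp_eq_zero (by simp), map_zero]
  | cons d I ih =>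
    rw [List.cons_append, basisComp_cons, basisComp_cons, ih, map_smul, map_add,
      rho_lam_of_lpar_eq_zero hlc, apply_ite (rho r [c]), rho_single, hlc, map_zero]
    simp

variable {a b x : Fin m}

/-- `φ ↦ (-1)^{|φ|} φ ∘ d`, so that `D φ = d ∘ φ - rightPart φ`. -/
noncomputable def rightPart (r : ℕ) (a b : Fin m) : Cochain m →ₗ[ℂ] Cochain m :=
  (comp r).flip (dd a b) ∘ₗ twist r

lemma rightPart_single (p : List (Fin m) × Fin m) :
    rightPart r a b (single p 1) = (-1 : ℂ) ^ ppar r p • basisComp r p ([a, a], b) := by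
  rw [rightPart, LinearMap.comp_apply, twist_single, LinearMap.flip_apply, map_smul,
    LinearMap.smul_apply, dd, comp_single_single]

lemma Dx_eq_neg_rightPart (hab : a ≠ b) {n : ℕ} {z : Cochain m} (hz : z ∈ Cnx m n x) :
    Dx r a b x z = -rightPart r a b z := by
  suffices Cnx m n x ≤ LinearMap.eqLocus (Dx r a b x) (-rightPart r a b) from this hz
  refine Submodule.span_le.mpr ?_
  rintro _ ⟨I, -, rfl⟩
  have hDop : Dop r a b = comp r (dd a b) - rightPart r a b := rfl
  simp only [SetLike.mem_coe, LinearMap.mem_eqLocus, Dx, hDop, LinearMap.neg_apply, dd]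
  split_ifs with hx
  · subst hx
    simp [comp_single_single, rightPart_single, projOut_basisComp, hab.symm]
  · rw [LinearMap.sub_apply, comp_single_single, basisComp_eq_zero (by simpa using hx), zero_sub]

lemma rightPart_lam (hb : par r b = 1) (c : Fin m) (g : Cochain m) :
    rightPart r a b (lam [c] g) =
      lam [c] (rightPart r a b g) + if c = b then lam [a, a] (twist r g) else 0 := by
  suffices rightPart r a b ∘ₗ lam [c] =
      lam [c] ∘ₗ rightPart r a b + if c = b then lam [a, a] ∘ₗ twist r else 0 by
    rw [← LinearMap.comp_apply, this]
    split_ifs <;> simp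
  refine cochain_hom_ext fun ⟨I, y⟩ => ?_
  -- the twist contributes `(-1)^{|c|}`, and moving the odd `d` past `c` another `(-1)^{|c|}`
  have hsign : ppar r (c :: I, y) + par r c * ppar r ([a, a], b) =
      ppar r (I, y) + 2 * (par r c * (par r a + 1)) := by
    simp only [ppar, lpar_cons, hb]
    simp only [lpar, List.map_nil, List.sum_nil]
    ring
  simp only [LinearMap.comp_apply, LinearMap.add_apply, lam_single, List.singleton_append,
    rightPart_single, basisComp_cons]
  rw [smul_smul, ← pow_add, hsign, pow_add, pow_mul, neg_one_sq, one_pow, mul_one]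
  split_ifs
  · simp [twist_single, lam_single, add_comm]
  · simp

lemma rightPart_rho (ha : par r a = 0) (hab : a ≠ b) (g : Cochain m) :
    rightPart r a b (rho r [a] g) = rho r [a] (rightPart r a b g) := by
  have hla : lpar r [a] = 0 := (lpar_singleton a).trans ha
  refine LinearMap.congr_fun (cochain_hom_ext fun ⟨I, y⟩ => ?_ :
    rightPart r a b ∘ₗ rho r [a] = rho r [a] ∘ₗ rightPart r a b) g
  simp [rho_single, hla, rightPart_single, ppar, lpar_append,
    basisComp_append_of_par_eq_zero (q := ([a, a], b)) ha I y hab]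

lemma rightPart_theta (ha : par r a = 0) (hb : par r b = 1) (hab : a ≠ b) (g : Cochain m) :
    rightPart r a b (theta a b g) = theta a b (rightPart r a b g) := by
  rw [theta_apply, theta_apply, map_sub, rightPart_lam hb, rightPart_lam hb, rightPart_lam hb,
    rightPart_lam hb, if_neg hab, if_neg hab, if_pos rfl, twist_lam_of_par_eq_zero ha]
  simp only [add_zero, map_add, lam_lam, List.cons_append, List.nil_append]
  exact add_sub_add_right_eq_sub _ _ _

lemma lam_mem_Cnx (J : List (Fin m)) {n : ℕ} {g : Cochain m} (hg : g ∈ Cnx m n x) :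
    lam J g ∈ Cnx m (n + J.length) x := by
  suffices (Cnx m n x).map (lam J) ≤ Cnx m (n + J.length) x from this (Submodule.mem_map_of_mem hg)
  refine (Submodule.map_span_le _ _ _).mpr ?_
  rintro _ ⟨I, rfl, rfl⟩
  exact Submodule.subset_span ⟨J ++ I, by simp [add_comm], by simp [lam_single]⟩

lemma rho_mem_Cnx (J : List (Fin m)) {n : ℕ} {g : Cochain m} (hg : g ∈ Cnx m n x) :
    rho r J g ∈ Cnx m (n + J.length) x := by
  suffices (Cnx m n x).map (rho r J) ≤ Cnx m (n + J.length) x from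
    this (Submodule.mem_map_of_mem hg)
  refine (Submodule.map_span_le _ _ _).mpr ?_
  rintro _ ⟨I, rfl, rfl⟩
  rw [rho_single]
  exact Submodule.smul_mem _ _ (Submodule.subset_span ⟨I ++ J, by simp, rfl⟩)

theorem Chat_le_of_closed {Q : ℕ → Submodule ℂ (Cochain m)}
    (h0 : single ([], x) 1 ∈ Q 0) (h1 : single ([a], x) 1 ∈ Q 1)
    (hlam : ∀ n c, c ≠ a → c ≠ b → ∀ g ∈ Q n, lam [c] g ∈ Q (n + 1))
    (htheta : ∀ n, ∀ g ∈ Q n, theta a b g ∈ Q (n + 2))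
    (hL : ∀ n, ∀ g ∈ Q (n + 1), (lam [a] + rho r [a]) g ∈ Q (n + 2)) :
    ∀ n, Chat r a b x n ≤ Q n
  | 0 => Submodule.span_le.mpr (by simpa using h0)
  | 1 => by
    refine Submodule.span_le.mpr (Set.union_subset (by simpa using h1) ?_)
    simp only [Set.iUnion_subset_iff, Set.image_subset_iff]
    exact fun c hc g hg => hlam 0 c hc.1 hc.2 g (Chat_le_of_closed h0 h1 hlam htheta hL 0 hg)
  | n + 2 => by
    have ih₀ := Chat_le_of_closed h0 h1 hlam htheta hL n
    have ih₁ := Chat_le_of_closed h0 h1 hlam htheta hL (n + 1)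
    refine Submodule.span_le.mpr (Set.union_subset (Set.union_subset ?_ ?_) ?_) <;>
      simp only [Set.iUnion_subset_iff, Set.image_subset_iff]
    · exact fun c hc g hg => hlam (n + 1) c hc.1 hc.2 g (ih₁ hg)
    · exact fun g hg => htheta n g (ih₀ hg)
    · exact fun c hc g hg => hL n _ (hlam n c hc.1 hc.2 g (ih₀ hg))

lemma Chat_le_Cnx : ∀ n, Chat r a b x n ≤ Cnx m n x := by
  refine Chat_le_of_closed (Submodule.subset_span ⟨[], rfl, rfl⟩)
    (Submodule.subset_span ⟨[a], rfl, rfl⟩) (fun n c _ _ g hg => lam_mem_Cnx [c] hg)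
    (fun n g hg => ?_) (fun n g hg => ?_)
  · rw [theta, LinearMap.sub_apply]
    exact sub_mem (lam_mem_Cnx [a, b] hg) (lam_mem_Cnx [b, a] hg)
  · rw [LinearMap.add_apply]
    exact add_mem (lam_mem_Cnx [a] hg) (rho_mem_Cnx [a] hg)

lemma Chat_le_ker_rightPart (ha : par r a = 0) (hb : par r b = 1) (hab : a ≠ b) :
    ∀ n, Chat r a b x n ≤ LinearMap.ker (rightPart r a b) := by
  have hlam : ∀ c, c ≠ b → ∀ g ∈ LinearMap.ker (rightPart r a b),
      lam [c] g ∈ LinearMap.ker (rightPart r a b) := fun c hc g hg => by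
    rw [LinearMap.mem_ker] at hg ⊢
    rw [rightPart_lam hb, hg, map_zero, if_neg hc, add_zero]
  refine Chat_le_of_closed ?_ ?_ (fun _ c _ hc => hlam c hc) (fun _ g hg => ?_) (fun _ g hg => ?_)
  · simp [rightPart_single, basisComp_eq_zero]
  · simp [rightPart_single, basisComp_eq_zero, hab.symm]
  · rw [LinearMap.mem_ker] at hg ⊢
    rw [rightPart_theta ha hb hab, hg, map_zero]
  · rw [LinearMap.mem_ker, LinearMap.add_apply, map_add, rightPart_rho ha hab,
      LinearMap.mem_ker.mp (hlam a hab g hg), LinearMap.mem_ker.mp hg, map_zero, add_zero]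

lemma Chat_le_ker_Dx (ha : par r a = 0) (hb : par r b = 1) (hab : a ≠ b) (n : ℕ) :
    Chat r a b x n ≤ LinearMap.ker (Dx r a b x) := fun z hz => by
  rw [LinearMap.mem_ker, Dx_eq_neg_rightPart hab (Chat_le_Cnx n hz),
    LinearMap.mem_ker.mp (Chat_le_ker_rightPart ha hb hab n hz), neg_zero]

noncomputable def projNoRepeat (a : Fin m) : Cochain m →ₗ[ℂ] Cochain m :=
  Finsupp.lsum ℂ fun p => LinearMap.toSpanSingleton ℂ (Cochain m)
    (if [a, a] <:+: p.1 then 0 else single p 1)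

noncomputable def dropHead (c : Fin m) : Cochain m →ₗ[ℂ] Cochain m :=
  Finsupp.lsum ℂ fun p => LinearMap.toSpanSingleton ℂ (Cochain m)
    (if p.1.head? = some c then single (p.1.tail, p.2) 1 else 0)

lemma projNoRepeat_single (a : Fin m) (p : List (Fin m) × Fin m) (t : ℂ) :
    projNoRepeat a (single p t) = if [a, a] <:+: p.1 then 0 else single p t := by
  simp [projNoRepeat, smul_ite, Finsupp.smul_single]

lemma dropHead_lam (c d : Fin m) (g : Cochain m) :
    dropHead c (lam [d] g) = if d = c then g else 0 := by
  have : dropHead c ∘ₗ lam [d] = if d = c then LinearMap.id else 0 :=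
    cochain_hom_ext fun p => by split_ifs with h <;> simp [dropHead, lam_single, h]
  rw [← LinearMap.comp_apply, this]
  split_ifs <;> rfl

lemma dropHead_sum_lam (s : Finset (Fin m)) (g : Fin m → Cochain m) (c : Fin m) :
    dropHead c (∑ d ∈ s, lam [d] (g d)) = if c ∈ s then g c else 0 := by
  simp [map_sum, dropHead_lam, Finset.sum_ite_eq']

lemma infix_cons_iff_of_ne {α : Type*} {a c : α} (hc : c ≠ a) (l J : List α) :
    a :: l <:+: c :: J ↔ a :: l <:+: J := by
  refine ⟨fun h => ?_, List.infix_cons⟩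
  rcases List.infix_cons_iff.mp h with h | h
  · exact absurd (List.cons_prefix_cons.mp h).1.symm hc
  · exact h

lemma pair_infix_cons_cons_iff_of_ne {α : Type*} {a c : α} (hc : c ≠ a) (J : List α) :
    [a, a] <:+: a :: c :: J ↔ [a, a] <:+: J := by
  refine ⟨fun h => ?_, fun h => List.infix_cons (List.infix_cons h)⟩
  rcases List.infix_cons_iff.mp h with h | h
  · exact absurd (List.cons_prefix_cons.mp (List.cons_prefix_cons.mp h).2).1.symm hc
  · exact (infix_cons_iff_of_ne hc _ J).mp h

lemma projNoRepeat_lam {c : Fin m} (hc : c ≠ a) (g : Cochain m) :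
    projNoRepeat a (lam [c] g) = lam [c] (projNoRepeat a g) :=
  LinearMap.congr_fun (cochain_hom_ext fun p => by
    simp only [LinearMap.comp_apply, lam_single, projNoRepeat_single, List.singleton_append,
      infix_cons_iff_of_ne hc, apply_ite (lam [c]), map_zero] :
    projNoRepeat a ∘ₗ lam [c] = lam [c] ∘ₗ projNoRepeat a) g

lemma projNoRepeat_lam_lam {c : Fin m} (hc : c ≠ a) (g : Cochain m) :
    projNoRepeat a (lam [a] (lam [c] g)) = lam [a] (lam [c] (projNoRepeat a g)) := by
  rw [lam_lam, lam_lam]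
  exact LinearMap.congr_fun (cochain_hom_ext fun p => by
    simp only [LinearMap.comp_apply, lam_single, projNoRepeat_single, List.cons_append,
      List.nil_append, pair_infix_cons_cons_iff_of_ne hc, apply_ite (lam [a, c]), map_zero] :
    projNoRepeat a ∘ₗ lam [a, c] = lam [a, c] ∘ₗ projNoRepeat a) g

lemma projNoRepeat_eq_self_of_mem_Cnx (a : Fin m) {n : ℕ} (hn : n ≤ 1) {z : Cochain m}
    (hz : z ∈ Cnx m n x) : projNoRepeat a z = z := by
  suffices Cnx m n x ≤ LinearMap.eqLocus (projNoRepeat a) LinearMap.id from this hz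
  refine Submodule.span_le.mpr ?_
  rintro _ ⟨I, rfl, rfl⟩
  have : ¬ [a, a] <:+: I := fun h => by simpa using h.length_le.trans hn
  simp [projNoRepeat_single, this]

lemma projNoRepeat_rightPart (g : Cochain m) : projNoRepeat a (rightPart r a b g) = 0 := by
  refine LinearMap.congr_fun (cochain_hom_ext fun p => ?_ :
    projNoRepeat a ∘ₗ rightPart r a b = 0) g
  simp only [LinearMap.comp_apply, rightPart_single, basisComp, map_smul, map_sum,
    apply_ite (projNoRepeat a), projNoRepeat_single, insertAt, List.infix_append, if_true,
    smul_zero, map_zero, ite_self, Finset.sum_const_zero, LinearMap.zero_apply]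

lemma Bx_le_ker_projNoRepeat (hab : a ≠ b) : ∀ n, Bx r a b x n ≤ LinearMap.ker (projNoRepeat a)
  | 0 => bot_le
  | n + 1 => by
    rintro _ ⟨g, hg, rfl⟩
    rw [LinearMap.mem_ker, Dx_eq_neg_rightPart hab hg, map_neg, projNoRepeat_rightPart, neg_zero]

lemma dropHead_projNoRepeat_lam {c : Fin m} (hc : c ≠ a) (g : Cochain m) :
    dropHead a (projNoRepeat a (lam [c] g)) = 0 := by
  rw [projNoRepeat_lam hc, dropHead_lam, if_neg hc]

lemma dropHead_projNoRepeat_theta (hab : a ≠ b) (g : Cochain m) :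
    dropHead a (projNoRepeat a (theta a b g)) = lam [b] (projNoRepeat a g) := by
  rw [theta_apply, map_sub, projNoRepeat_lam_lam hab.symm, projNoRepeat_lam hab.symm, map_sub,
    dropHead_lam, dropHead_lam, if_pos rfl, if_neg hab.symm, sub_zero]

lemma dropHead_projNoRepeat_lam_add_rho (ha : par r a = 0) {c : Fin m} (hc : c ≠ a)
    (g : Cochain m) :
    dropHead a (projNoRepeat a ((lam [a] + rho r [a]) (lam [c] g))) =
      lam [c] (projNoRepeat a g) := by
  rw [LinearMap.add_apply, rho_lam_of_lpar_eq_zero ((lpar_singleton a).trans ha), map_add,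
    projNoRepeat_lam_lam hc, projNoRepeat_lam hc, map_add, dropHead_lam, dropHead_lam, if_pos rfl,
    if_neg hc, add_zero]

lemma dropHead_projNoRepeat_decomp (ha : par r a = 0) (hab : a ≠ b) (u : Fin m → Cochain m)
    (v : Cochain m) (w : Fin m → Cochain m) :
    dropHead a (projNoRepeat a (∑ c with c ≠ a ∧ c ≠ b, lam [c] (u c) + theta a b v +
      ∑ c with c ≠ a ∧ c ≠ b, (lam [a] + rho r [a]) (lam [c] (w c)))) =
      lam [b] (projNoRepeat a v) + ∑ c with c ≠ a ∧ c ≠ b, lam [c] (projNoRepeat a (w c)) := by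
  have hT : ∀ {c}, c ∈ Finset.univ.filter (fun c : Fin m => c ≠ a ∧ c ≠ b) → c ≠ a :=
    fun hc => (Finset.mem_filter.mp hc).2.1
  simp only [map_add, map_sum]
  rw [Finset.sum_eq_zero fun c hc => dropHead_projNoRepeat_lam (hT hc) _, zero_add,
    dropHead_projNoRepeat_theta hab,
    Finset.sum_congr rfl fun c hc => dropHead_projNoRepeat_lam_add_rho ha (hT hc) _]

lemma exists_sum_of_mem_iSup_map {ι R M N : Type*} [Fintype ι] [Semiring R] [AddCommMonoid M]
    [AddCommMonoid N] [Module R M] [Module R N] {P : ι → Prop} [DecidablePred P]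
    (f : ι → M →ₗ[R] N) (p : Submodule R M) {y : N} (hy : y ∈ ⨆ (i) (_ : P i), p.map (f i)) :
    ∃ g : ι → M, (∀ i, g i ∈ p) ∧ y = ∑ i with P i, f i (g i) := by
  have hy' : y ∈ ⨆ i ∈ Finset.univ.filter P, p.map (f i) := by simpa using hy
  obtain ⟨μ, rfl⟩ := (Submodule.mem_iSup_finset_iff_exists_sum _ _).mp hy'
  choose g hg hfg using fun i => Submodule.mem_map.mp (μ i).2
  exact ⟨g, hg, Finset.sum_congr rfl fun i _ => (hfg i).symm⟩

lemma exists_of_mem_Chat_add_two {n : ℕ} {z : Cochain m} (hz : z ∈ Chat r a b x (n + 2)) :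
    ∃ (u : Fin m → Cochain m) (v : Cochain m) (w : Fin m → Cochain m),
      (∀ c, u c ∈ Chat r a b x (n + 1)) ∧ v ∈ Chat r a b x n ∧ (∀ c, w c ∈ Chat r a b x n) ∧
      z = ∑ c with c ≠ a ∧ c ≠ b, lam [c] (u c) + theta a b v +
        ∑ c with c ≠ a ∧ c ≠ b, (lam [a] + rho r [a]) (lam [c] (w c)) := by
  simp only [Chat, Submodule.span_union, Submodule.span_iUnion₂, Submodule.span_image,
    Submodule.span_eq, ← Submodule.map_comp] at hz
  obtain ⟨_, hy, _, hwSum, rfl⟩ := Submodule.mem_sup.mp hz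
  obtain ⟨_, huSum, _, ⟨v, hv, rfl⟩, rfl⟩ := Submodule.mem_sup.mp hy
  obtain ⟨u, hu, rfl⟩ := exists_sum_of_mem_iSup_map _ _ huSum
  obtain ⟨w, hw, rfl⟩ := exists_sum_of_mem_iSup_map _ _ hwSum
  exact ⟨u, v, w, hu, hv, hw, rfl⟩

theorem disjoint_Chat_ker_projNoRepeat (ha : par r a = 0) (hab : a ≠ b) :
    ∀ n, Disjoint (Chat r a b x n) (LinearMap.ker (projNoRepeat a))
  | 0 => Submodule.disjoint_def.mpr fun z hz hPz =>
    (projNoRepeat_eq_self_of_mem_Cnx a zero_le_one (Chat_le_Cnx 0 hz)).symm.trans hPz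
  | 1 => Submodule.disjoint_def.mpr fun z hz hPz =>
    (projNoRepeat_eq_self_of_mem_Cnx a le_rfl (Chat_le_Cnx 1 hz)).symm.trans hPz
  | n + 2 => by
    have ih₀ := Submodule.disjoint_def.mp (disjoint_Chat_ker_projNoRepeat ha hab n)
    have ih₁ := Submodule.disjoint_def.mp (disjoint_Chat_ker_projNoRepeat ha hab (n + 1))
    refine Submodule.disjoint_def.mpr fun z hz hPz => ?_
    obtain ⟨u, v, w, hu, hv, hw, rfl⟩ := exists_of_mem_Chat_add_two hz
    set T := Finset.univ.filter fun c : Fin m => c ≠ a ∧ c ≠ b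
    rw [LinearMap.mem_ker] at hPz
    have hhead := dropHead_projNoRepeat_decomp ha hab u v w
    rw [hPz, map_zero] at hhead
    have hv0 : v = 0 := by
      refine ih₀ v hv ?_
      have := congrArg (dropHead b) hhead
      rw [map_zero, map_add, dropHead_lam, if_pos rfl, dropHead_sum_lam,
        if_neg fun hb => (Finset.mem_filter.mp hb).2.2 rfl, add_zero] at this
      exact this.symm
    have hw0 : ∀ c ∈ T, w c = 0 := fun c hc => by
      refine ih₀ (w c) (hw c) ?_
      have := congrArg (dropHead c) hhead
      rw [map_zero, map_add, dropHead_lam, if_neg (Finset.mem_filter.mp hc).2.2.symm,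
        dropHead_sum_lam, if_pos hc, zero_add] at this
      exact this.symm
    have hwSum : ∑ c ∈ T, (lam [a] + rho r [a]) (lam [c] (w c)) = 0 :=
      Finset.sum_eq_zero fun c hc => by rw [hw0 c hc, map_zero, map_zero]
    rw [hv0, hwSum, map_zero, add_zero, add_zero] at hPz ⊢
    rw [map_sum,
      Finset.sum_congr rfl fun c hc => projNoRepeat_lam (Finset.mem_filter.mp hc).2.1 _] at hPz
    refine Finset.sum_eq_zero fun c hc => ?_
    have := congrArg (dropHead c) hPz
    rw [map_zero, dropHead_sum_lam, if_pos hc] at this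
    rw [ih₁ (u c) (hu c) this, map_zero]

end

/-- `Ĉ^n_x` consists of nontrivial cocycles of the restricted complex:
`Ĉ^n_x ⊆ ker D_x` and `Ĉ^n_x ∩ im D_x = 0`. -/
theorem Chat_nontrivial_cocycles (r s : ℕ) (hr : 1 ≤ r) (hs : 1 ≤ s)
    (e1 fs : Fin (r + s)) (he1 : (e1 : ℕ) = 0) (hfs : (fs : ℕ) = r + s - 1) :
    ∀ x : Fin (r + s), ∀ n : ℕ,
      Chat r e1 fs x n ≤ LinearMap.ker (Dx r e1 fs x) ∧
      Chat r e1 fs x n ⊓ Bx r e1 fs x n = ⊥ := by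
  have ha : par r e1 = 0 := if_pos (by omega)
  have hb : par r fs = 1 := if_neg (by omega)
  have hab : e1 ≠ fs := Fin.ne_of_val_ne (by omega)
  intro x n
  exact ⟨Chat_le_ker_Dx ha hb hab n, disjoint_iff.mp
    ((disjoint_Chat_ker_projNoRepeat ha hab n).mono_right (Bx_le_ker_projNoRepeat hab n))⟩

end NilpotentCohomology
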